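/- arXiv:2007.07433 — 2 statements merged into one kernel-verified Lean document; each statement's English description precedes it below -/
import Mathlib

section
/- Let M = {M₁,…,M_k} ⊆ S^n with k ≥ 2. If for every pair of distinct indices i, j there exists (α,β) ≠ (0,0) with αM_i + βM_j positive semidefinite, then S(M) = {X ⪰ 0 : ⟨M_i,X⟩ ≥ 0 ∀i} is rank-one generated. -/
open Matrix Set

noncomputable section

/-- The set of rank-one (outer product) matrices `x xᵀ`. -/
def RankOneSet (n : ℕ) : Set (Matrix (Fin n) (Fin n) ℝ) :=
  {X | ∃ x : Fin n → ℝ, X = vecMulVec x x}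

/-- A set of PSD matrices is rank-one generated if it equals the convex hull of its
rank-one members. -/
def IsROG {n : ℕ} (S : Set (Matrix (Fin n) (Fin n) ℝ)) : Prop :=
  S = convexHull ℝ (S ∩ RankOneSet n)

/-- `ℝ₊X` is an extreme ray of `S`: `X ∈ S`, `X ≠ 0`, and whenever `X = (Y+Z)/2` with
`Y, Z ∈ S`, both `Y` and `Z` lie on the ray `ℝ₊X`. -/
def IsExtremeRay' {n : ℕ} (S : Set (Matrix (Fin n) (Fin n) ℝ))
    (X : Matrix (Fin n) (Fin n) ℝ) : Prop :=
  X ∈ S ∧ X ≠ 0 ∧ ∀ Y ∈ S, ∀ Z ∈ S, X = (1/2 : ℝ) • (Y + Z) →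
    (∃ α : ℝ, 0 ≤ α ∧ Y = α • X) ∧ (∃ β : ℝ, 0 ≤ β ∧ Z = β • X)

/-- `S(𝓜) = {X ⪰ 0 : ⟨N, X⟩ ≥ 0 ∀ N ∈ 𝓜}` with the trace inner product. -/
def SCone {n : ℕ} (𝓜 : Set (Matrix (Fin n) (Fin n) ℝ)) : Set (Matrix (Fin n) (Fin n) ℝ) :=
  {X | X.PosSemidef ∧ ∀ N ∈ 𝓜, 0 ≤ (N * X).trace}

/-- `T(𝓜) = {X ⪰ 0 : ⟨N, X⟩ = 0 ∀ N ∈ 𝓜}` with the trace inner product. -/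
def TCone {n : ℕ} (𝓜 : Set (Matrix (Fin n) (Fin n) ℝ)) : Set (Matrix (Fin n) (Fin n) ℝ) :=
  {X | X.PosSemidef ∧ ∀ N ∈ 𝓜, (N * X).trace = 0}

/-!
An element `X ∈ S(𝓜)` is peeled down to `0` by subtracting rank-one matrices `t • x xᵀ ∈ S(𝓜)`
with `x` in the range of `X`, `xᵀ M i x = 0` for every constraint tight at `X`, and `t` as large
as possible. Each step keeps `X ∈ S(𝓜)` and lowers `rank X + #{i | ⟨M i, X⟩ ≠ 0}`: either the
kernel of `X` grows or one more constraint becomes tight.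

Such an `x` exists whenever `X ≠ 0`. For `rank X = 1` take a generator of the range. Otherwise
`range X \ {0}` is connected. If the form of some tight `M i₀` is not identically zero on the
range, it takes both signs there and has a zero `x` on `range X \ {0}`; for each other `i` the
pencil `α M i₀ + β M i ⪰ 0` forces `β ≠ 0`, and its trace against `X` fixes the sign of `β`, so
`xᵀ M i x ≥ 0`, with equality when `i` is tight. If instead every tight form vanishes on the
range, the open sets `{y | yᵀ M j y < 0}` of the slack constraints are pairwise nested or
disjoint (again by the pencils), so if they covered the connected set `range X \ {0}` it would
lie in one of them, contradicting `⟨M j, X⟩ > 0`.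
-/

theorem Submodule.isPathConnected_diff_zero {E : Type*} [AddCommGroup E] [Module ℝ E]
    [TopologicalSpace E] [IsTopologicalAddGroup E] [ContinuousSMul ℝ E]
    (V : Submodule ℝ E) (h : 1 < Module.rank ℝ V) : IsPathConnected ((V : Set E) \ {0}) := by
  convert (isPathConnected_compl_singleton_of_one_lt_rank h 0).image continuous_subtype_val
  ext x
  simp [and_comm]

theorem IsPreconnected.exists_subset_of_nested_or_disjoint {α ι : Type*} [TopologicalSpace α]
    {T : Set α} (hT : IsPreconnected T) (hTne : T.Nonempty) {s : Finset ι} {U : ι → Set α}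
    (hUo : ∀ i ∈ s, IsOpen (U i))
    (hU : ∀ i ∈ s, ∀ j ∈ s, U i ⊆ U j ∨ U j ⊆ U i ∨ Disjoint (U i) (U j))
    (hTU : T ⊆ ⋃ i ∈ s, U i) : ∃ i ∈ s, T ⊆ U i := by
  classical
  have hmeets : (s.filter fun i : ι => (T ∩ U i).Nonempty).Nonempty := by
    obtain ⟨x, hx⟩ := hTne
    obtain ⟨j, hj, hxj⟩ := mem_iUnion₂.mp (hTU hx)
    exact ⟨j, Finset.mem_filter.mpr ⟨hj, x, hx, hxj⟩⟩
  obtain ⟨i, hi, hmax⟩ := Finset.exists_maximalFor U _ hmeets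
  obtain ⟨his, hTi⟩ := Finset.mem_filter.mp hi
  set W := ⋃ j ∈ s.filter (fun j : ι => ¬U j ⊆ U i), U j
  refine ⟨i, his, hT.subset_left_of_subset_union (v := W) (hUo i his)
    (isOpen_biUnion fun j hj => hUo j (Finset.mem_filter.mp hj).1) ?_ ?_ hTi⟩
  · refine disjoint_iUnion₂_right.mpr fun j hj => ?_
    obtain ⟨hjs, hji⟩ := Finset.mem_filter.mp hj
    rcases hU i his j hjs with hij | hji' | hdisj
    · exact absurd (hmax (Finset.mem_filter.mpr ⟨hjs, hTi.mono (inter_subset_inter_right T hij)⟩)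
        hij) hji
    · exact absurd hji' hji
    · exact hdisj
  · intro x hx
    obtain ⟨j, hj, hxj⟩ := mem_iUnion₂.mp (hTU hx)
    by_cases hji : U j ⊆ U i
    · exact Or.inl (hji hxj)
    · exact Or.inr (mem_iUnion₂.mpr ⟨j, Finset.mem_filter.mpr ⟨hj, hji⟩, hxj⟩)

lemma exists_max_step {κ : Type*} [Fintype κ] (a b : κ → ℝ) (hb : ∀ j, 0 ≤ b j)
    (ha : ∃ j, 0 < a j) : ∃ t, 0 ≤ t ∧ (∀ j, a j * t ≤ b j) ∧ ∃ j, 0 < a j ∧ a j * t = b j := by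
  classical
  obtain ⟨j, hj, hmin⟩ := (Finset.univ.filter fun j => 0 < a j).exists_min_image
    (fun j => b j / a j) (by simpa [Finset.Nonempty] using ha)
  have hj : 0 < a j := (Finset.mem_filter.mp hj).2
  refine ⟨b j / a j, div_nonneg (hb j) hj.le, fun i => ?_, j, hj, mul_div_cancel₀ _ hj.ne'⟩
  rcases le_or_gt (a i) 0 with hi | hi
  · exact (mul_nonpos_of_nonpos_of_nonneg hi (div_nonneg (hb j) hj.le)).trans (hb i)
  · rw [mul_comm, ← le_div_iff₀ hi]
    exact hmin i (Finset.mem_filter.mpr ⟨Finset.mem_univ i, hi⟩)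

lemma add_mem_convexHull_of_smul_two_mem {E : Type*} [AddCommGroup E] [Module ℝ E] {s : Set E}
    (hs : ∀ z ∈ s, (2 : ℝ) • z ∈ s) {a b : E} (ha : a ∈ convexHull ℝ s) (hb : b ∈ s) :
    a + b ∈ convexHull ℝ s := by
  have h2a : (2 : ℝ) • a ∈ convexHull ℝ s := by
    have := Set.smul_mem_smul_set (a := (2 : ℝ)) ha
    rw [← convexHull_smul] at this
    exact convexHull_mono (Set.smul_set_subset_iff.mpr hs) this
  have := convex_convexHull ℝ s h2a (subset_convexHull ℝ s (hs b hb))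
    (by norm_num : (0 : ℝ) ≤ 1 / 2) (by norm_num : (0 : ℝ) ≤ 1 / 2) (by norm_num)
  rwa [smul_smul, smul_smul, show (1 / 2 : ℝ) * 2 = 1 by norm_num, one_smul, one_smul] at this

namespace Matrix

variable {m ι : Type*} [Fintype m]

lemma dotProduct_sq_le (a b : m → ℝ) : (a ⬝ᵥ b) ^ 2 ≤ (a ⬝ᵥ a) * (b ⬝ᵥ b) := by
  simpa only [dotProduct, sq] using Finset.sum_mul_sq_le_sq_mul_sq Finset.univ a b

lemma trace_mul_vecMulVec_self (A : Matrix m m ℝ) (x : m → ℝ) :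
    (A * vecMulVec x x).trace = x ⬝ᵥ A *ᵥ x := by
  rw [mul_vecMulVec, trace_vecMulVec, dotProduct_comm]

lemma sub_smul_vecMulVec_mulVec (X : Matrix m m ℝ) (y u : m → ℝ) (t : ℝ) :
    (X - t • vecMulVec y y) *ᵥ u = X *ᵥ u - (t * (y ⬝ᵥ u)) • y := by
  rw [sub_mulVec, smul_mulVec, vecMulVec_mulVec, op_smul_eq_smul, smul_smul]

lemma dotProduct_smul_add_smul_mulVec (α β : ℝ) (A C : Matrix m m ℝ) (y : m → ℝ) :
    y ⬝ᵥ (α • A + β • C) *ᵥ y = α * (y ⬝ᵥ A *ᵥ y) + β * (y ⬝ᵥ C *ᵥ y) := by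
  simp only [add_mulVec, smul_mulVec, dotProduct_add, dotProduct_smul, smul_eq_mul]

lemma trace_smul_add_smul_mul (α β : ℝ) (A C X : Matrix m m ℝ) :
    ((α • A + β • C) * X).trace = α * (A * X).trace + β * (C * X).trace := by
  simp only [add_mul, smul_mul, trace_add, trace_smul, smul_eq_mul]

lemma continuous_dotProduct_mulVec_self (A : Matrix m m ℝ) :
    Continuous fun y : m → ℝ => y ⬝ᵥ A *ᵥ y := by
  fun_prop

lemma trace_mul_transpose_mul_self (M B : Matrix m m ℝ) :
    (M * (Bᵀ * B)).trace = (B * M * Bᵀ).trace := by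
  rw [← Matrix.mul_assoc, trace_mul_comm, Matrix.mul_assoc]

lemma range_mulVecLin_transpose_mul_self (B : Matrix m m ℝ) :
    LinearMap.range (Bᵀ * B).mulVecLin = LinearMap.range Bᵀ.mulVecLin := by
  refine Submodule.eq_of_le_of_finrank_eq ?_ ?_
  · rw [mulVecLin_mul]; exact LinearMap.range_comp_le_range _ _
  · change (Bᵀ * B).rank = Bᵀ.rank
    rw [rank_transpose_mul_self, rank_transpose]

lemma posSemidef_mul_mul_transpose_of_nonneg {M : Matrix m m ℝ} (hM : M.IsSymm) (B : Matrix m m ℝ)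
    (h : ∀ v ∈ LinearMap.range Bᵀ.mulVecLin, 0 ≤ v ⬝ᵥ M *ᵥ v) : (B * M * Bᵀ).PosSemidef := by
  refine .of_dotProduct_mulVec_nonneg ?_ fun u => ?_
  · simp [IsHermitian, conjTranspose_eq_transpose_of_trivial, transpose_mul, hM.eq, mul_assoc]
  · simpa [← mulVec_mulVec, dotProduct_mulVec _ B, ← mulVec_transpose] using h _ ⟨u, rfl⟩

lemma ker_le_ker_sub_smul_vecMulVec {X : Matrix m m ℝ} (hX : X.IsSymm) (w : m → ℝ) (t : ℝ) :
    LinearMap.ker X.mulVecLin ≤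
      LinearMap.ker (X - t • vecMulVec (X *ᵥ w) (X *ᵥ w)).mulVecLin := by
  intro u hu
  rw [LinearMap.mem_ker, mulVecLin_apply] at hu ⊢
  rw [sub_smul_vecMulVec_mulVec, hu, dotProduct_comm, dotProduct_mulVec, ← mulVec_transpose,
    hX.eq, hu, zero_dotProduct, mul_zero, zero_smul, sub_zero]

section rank

variable {K : Type*} [Field K] {A B : Matrix m m K}

lemma rank_le_rank_of_ker_le (h : LinearMap.ker A.mulVecLin ≤ LinearMap.ker B.mulVecLin) :
    B.rank ≤ A.rank := by
  have hA := A.mulVecLin.finrank_range_add_finrank_ker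
  have hB := B.mulVecLin.finrank_range_add_finrank_ker
  have := Submodule.finrank_mono h
  unfold rank
  omega

lemma rank_lt_rank_of_ker_lt (h : LinearMap.ker A.mulVecLin < LinearMap.ker B.mulVecLin) :
    B.rank < A.rank := by
  have hA := A.mulVecLin.finrank_range_add_finrank_ker
  have hB := B.mulVecLin.finrank_range_add_finrank_ker
  have := Submodule.finrank_lt_finrank_of_lt h
  unfold rank
  omega

end rank

def PairwisePSDPencil (M : ι → Matrix m m ℝ) : Prop :=
  ∀ i j, i ≠ j → ∃ α β : ℝ, (α, β) ≠ (0, 0) ∧ (α • M i + β • M j).PosSemidef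

def IsPeelingDirection (M : ι → Matrix m m ℝ) (X : Matrix m m ℝ) (x : m → ℝ) : Prop :=
  x ∈ LinearMap.range X.mulVecLin ∧ x ≠ 0 ∧
    ∀ i, 0 ≤ x ⬝ᵥ M i *ᵥ x ∧ ((M i * X).trace = 0 → x ⬝ᵥ M i *ᵥ x = 0)

section slack

variable [Fintype ι] (M : ι → Matrix m m ℝ)

def slackCount (X : Matrix m m ℝ) : ℕ := (Finset.univ.filter fun i => (M i * X).trace ≠ 0).card

variable {M} {X Y : Matrix m m ℝ}

lemma slackCount_le (h : ∀ i, (M i * X).trace = 0 → (M i * Y).trace = 0) :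
    slackCount M Y ≤ slackCount M X :=
  Finset.card_le_card fun i hi => Finset.mem_filter.mpr
    ⟨Finset.mem_univ i, fun h0 => (Finset.mem_filter.mp hi).2 (h i h0)⟩

lemma slackCount_lt (h : ∀ i, (M i * X).trace = 0 → (M i * Y).trace = 0) {j : ι}
    (hjX : (M j * X).trace ≠ 0) (hjY : (M j * Y).trace = 0) :
    slackCount M Y < slackCount M X := by
  refine Finset.card_lt_card ((Finset.ssubset_iff_of_subset fun i hi => ?_).mpr ⟨j, ?_, ?_⟩)
  · exact Finset.mem_filter.mpr ⟨Finset.mem_univ i, fun h0 => (Finset.mem_filter.mp hi).2 (h i h0)⟩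
  · exact Finset.mem_filter.mpr ⟨Finset.mem_univ j, hjX⟩
  · exact fun hj => (Finset.mem_filter.mp hj).2 hjY

end slack

lemma PosSemidef.smul_add_smul_nonneg {A C : Matrix m m ℝ} {α β : ℝ}
    (hN : (α • A + β • C).PosSemidef) (y : m → ℝ) :
    0 ≤ α * (y ⬝ᵥ A *ᵥ y) + β * (y ⬝ᵥ C *ᵥ y) := by
  simpa [dotProduct_smul_add_smul_mulVec] using hN.dotProduct_mulVec_nonneg y

lemma setOf_neg_nested_or_disjoint {A C : Matrix m m ℝ} {α β a c : ℝ}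
    (hN : (α • A + β • C).PosSemidef) (hαβ : (α, β) ≠ (0, 0)) (ha : 0 < a) (hc : 0 < c)
    (h : 0 ≤ α * a + β * c) :
    {y | y ⬝ᵥ A *ᵥ y < 0} ⊆ {y | y ⬝ᵥ C *ᵥ y < 0} ∨
      {y | y ⬝ᵥ C *ᵥ y < 0} ⊆ {y | y ⬝ᵥ A *ᵥ y < 0} ∨
      Disjoint {y | y ⬝ᵥ A *ᵥ y < 0} {y | y ⬝ᵥ C *ᵥ y < 0} := by
  have hq := hN.smul_add_smul_nonneg
  rcases lt_or_ge β 0 with hβ | hβ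
  · have hα : 0 < α := by nlinarith
    refine Or.inl fun y hy => ?_
    rw [mem_ofPred_eq] at hy ⊢
    nlinarith [hq y]
  rcases lt_or_ge α 0 with hα | hα
  · have hβ : 0 < β := by nlinarith
    refine Or.inr <| Or.inl fun y hy => ?_
    rw [mem_ofPred_eq] at hy ⊢
    nlinarith [hq y]
  refine Or.inr <| Or.inr <| Set.disjoint_left.mpr fun y hyA hyC => hαβ ?_
  rw [mem_ofPred_eq] at hyA hyC
  have := hq y
  have hα0 : α = 0 := by nlinarith
  have hβ0 : β = 0 := by nlinarith
  rw [hα0, hβ0]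

variable [DecidableEq m] {X : Matrix m m ℝ}

lemma rank_eq_zero_iff {A : Matrix m m ℝ} : A.rank = 0 ↔ A = 0 := by
  rw [rank, Submodule.finrank_eq_zero, LinearMap.range_eq_bot, ← toLin'_apply',
    LinearEquiv.map_eq_zero_iff]

open scoped MatrixOrder in
lemma PosSemidef.exists_eq_transpose_mul_self (hX : X.PosSemidef) :
    ∃ B : Matrix m m ℝ, X = Bᵀ * B := by
  obtain ⟨B, hB⟩ := CStarAlgebra.nonneg_iff_eq_star_mul_self.mp hX.nonneg
  exact ⟨B, by simpa [star_eq_conjTranspose] using hB⟩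

theorem PosSemidef.sub_smul_vecMulVec (hX : X.PosSemidef)
    (w : m → ℝ) {t : ℝ} (ht : 0 ≤ t) (htw : t * (w ⬝ᵥ X *ᵥ w) ≤ 1) :
    (X - t • vecMulVec (X *ᵥ w) (X *ᵥ w)).PosSemidef := by
  obtain ⟨B, rfl⟩ := hX.exists_eq_transpose_mul_self
  have hgram : ∀ u v, u ⬝ᵥ (Bᵀ * B) *ᵥ v = B *ᵥ u ⬝ᵥ B *ᵥ v := fun u v => by
    rw [← mulVec_mulVec, dotProduct_mulVec, vecMul_transpose]
  refine .of_dotProduct_mulVec_nonneg ?_ fun u => ?_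
  · rw [isHermitian_iff_isSymm, IsSymm, transpose_sub, transpose_smul, transpose_vecMulVec,
      transpose_mul, transpose_transpose]
  · rw [star_trivial, sub_smul_vecMulVec_mulVec, dotProduct_sub, dotProduct_smul, smul_eq_mul,
      dotProduct_comm ((Bᵀ * B) *ᵥ w)]
    simp only [hgram] at htw ⊢
    have hcs := dotProduct_sq_le (B *ᵥ u) (B *ᵥ w)
    have hu : 0 ≤ B *ᵥ u ⬝ᵥ B *ᵥ u := dotProduct_self_star_nonneg (R := ℝ) _
    nlinarith [mul_le_mul_of_nonneg_left hcs ht, mul_le_mul_of_nonneg_left htw hu]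

namespace PosSemidef

variable {M : Matrix m m ℝ}

theorem trace_mul_nonneg_of_nonneg_on_range (hX : X.PosSemidef) (hM : M.IsSymm)
    (h : ∀ v ∈ LinearMap.range X.mulVecLin, 0 ≤ v ⬝ᵥ M *ᵥ v) : 0 ≤ (M * X).trace := by
  obtain ⟨B, rfl⟩ := hX.exists_eq_transpose_mul_self
  rw [range_mulVecLin_transpose_mul_self] at h
  rw [trace_mul_transpose_mul_self]
  exact (posSemidef_mul_mul_transpose_of_nonneg hM B h).trace_nonneg

theorem eq_zero_on_range_of_trace_mul_eq_zero (hX : X.PosSemidef) (hM : M.IsSymm)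
    (h : ∀ v ∈ LinearMap.range X.mulVecLin, 0 ≤ v ⬝ᵥ M *ᵥ v) (h0 : (M * X).trace = 0) :
    ∀ v ∈ LinearMap.range X.mulVecLin, v ⬝ᵥ M *ᵥ v = 0 := by
  obtain ⟨B, rfl⟩ := hX.exists_eq_transpose_mul_self
  rw [range_mulVecLin_transpose_mul_self] at h ⊢
  rw [trace_mul_transpose_mul_self,
    (posSemidef_mul_mul_transpose_of_nonneg hM B h).trace_eq_zero_iff] at h0
  rintro _ ⟨u, rfl⟩
  simpa [← mulVec_mulVec, dotProduct_mulVec _ B, ← mulVec_transpose] using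
    congrArg (u ⬝ᵥ · *ᵥ u) h0

theorem exists_pos_on_range_of_trace_mul_pos (hX : X.PosSemidef) (hM : M.IsSymm)
    (hpos : 0 < (M * X).trace) : ∃ v ∈ LinearMap.range X.mulVecLin, 0 < v ⬝ᵥ M *ᵥ v := by
  by_contra! h
  have := hX.trace_mul_nonneg_of_nonneg_on_range (M := -M) hM.neg fun v hv => by
    rw [neg_mulVec, dotProduct_neg]; linarith [h v hv]
  rw [neg_mul, trace_neg] at this
  linarith

theorem exists_pos_and_neg_on_range (hX : X.PosSemidef) (hM : M.IsSymm)
    (h0 : (M * X).trace = 0) (hv : ∃ v ∈ LinearMap.range X.mulVecLin, v ⬝ᵥ M *ᵥ v ≠ 0) :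
    (∃ a ∈ LinearMap.range X.mulVecLin, 0 < a ⬝ᵥ M *ᵥ a) ∧
      ∃ b ∈ LinearMap.range X.mulVecLin, b ⬝ᵥ M *ᵥ b < 0 := by
  obtain ⟨v, hvX, hv⟩ := hv
  constructor
  · by_contra! h
    have := hX.eq_zero_on_range_of_trace_mul_eq_zero (M := -M) hM.neg
      (fun v hv => by rw [neg_mulVec, dotProduct_neg]; linarith [h v hv])
      (by rw [neg_mul, trace_neg, h0, neg_zero]) v hvX
    rw [neg_mulVec, dotProduct_neg, neg_eq_zero] at this
    exact hv this
  · by_contra! h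
    exact hv (hX.eq_zero_on_range_of_trace_mul_eq_zero hM h h0 v hvX)

theorem trace_mul_nonneg {N : Matrix m m ℝ} (hX : X.PosSemidef) (hN : N.PosSemidef) :
    0 ≤ (N * X).trace :=
  hX.trace_mul_nonneg_of_nonneg_on_range (isHermitian_iff_isSymm.mp hN.1) fun v _ =>
    hN.dotProduct_mulVec_nonneg v

end PosSemidef

lemma quadForm_nonneg_of_pencil {A C : Matrix m m ℝ} {α β : ℝ}
    (hN : (α • A + β • C).PosSemidef) (hαβ : (α, β) ≠ (0, 0)) (hX : X.PosSemidef)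
    (hA : (A * X).trace = 0) (hC : 0 ≤ (C * X).trace)
    {a b : m → ℝ} (hqa : 0 < a ⬝ᵥ A *ᵥ a) (hqb : b ⬝ᵥ A *ᵥ b < 0)
    {x : m → ℝ} (hx : x ∈ LinearMap.range X.mulVecLin) (hxA : x ⬝ᵥ A *ᵥ x = 0) :
    0 ≤ x ⬝ᵥ C *ᵥ x ∧ ((C * X).trace = 0 → x ⬝ᵥ C *ᵥ x = 0) := by
  have hq := hN.smul_add_smul_nonneg
  have hβ : β ≠ 0 := by
    rintro rfl
    have : α = 0 := by nlinarith [hq a, hq b]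
    exact hαβ (by rw [this])
  have hτ := hX.trace_mul_nonneg hN
  rw [trace_smul_add_smul_mul, hA, mul_zero, zero_add] at hτ
  have hxN := hq x
  rw [hxA, mul_zero, zero_add] at hxN
  have htight : (C * X).trace = 0 → x ⬝ᵥ C *ᵥ x = 0 := fun hC0 => by
    have := hX.eq_zero_on_range_of_trace_mul_eq_zero (isHermitian_iff_isSymm.mp hN.1)
      (fun v _ => hN.dotProduct_mulVec_nonneg v)
      (by rw [trace_smul_add_smul_mul, hA, hC0]; ring) x hx
    rw [dotProduct_smul_add_smul_mulVec, hxA] at this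
    simpa [hβ] using this
  refine ⟨?_, htight⟩
  rcases hC.eq_or_lt with hC0 | hCpos
  · exact (htight hC0.symm).ge
  · have : 0 < β := lt_of_le_of_ne (nonneg_of_mul_nonneg_left hτ hCpos) (Ne.symm hβ)
    exact nonneg_of_mul_nonneg_right hxN this

variable {M : ι → Matrix m m ℝ}

namespace PosSemidef

theorem exists_isPeelingDirection_of_rank_eq_one (hM : ∀ i, (M i).IsSymm) (hX : X.PosSemidef)
    (hτ : ∀ i, 0 ≤ (M i * X).trace) (hr : X.rank = 1) : ∃ x, IsPeelingDirection M X x := by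
  obtain ⟨⟨x, hx⟩, hx0, hspan⟩ := finrank_eq_one_iff'.mp hr
  have hline : ∀ A : Matrix m m ℝ, 0 ≤ x ⬝ᵥ A *ᵥ x →
      ∀ v ∈ LinearMap.range X.mulVecLin, 0 ≤ v ⬝ᵥ A *ᵥ v := by
    intro A hA v hv
    obtain ⟨c, hc⟩ := hspan ⟨v, hv⟩
    obtain rfl : c • x = v := congrArg Subtype.val hc
    simp only [mulVec_smul, dotProduct_smul, smul_dotProduct, smul_eq_mul]
    nlinarith [mul_nonneg (mul_self_nonneg c) hA]
  refine ⟨x, hx, fun h => hx0 (Subtype.ext h), fun i => ?_⟩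
  by_cases hq : 0 ≤ x ⬝ᵥ M i *ᵥ x
  · exact ⟨hq, fun h0 => hX.eq_zero_on_range_of_trace_mul_eq_zero (hM i) (hline _ hq) h0 x hx⟩
  exfalso
  have hneg : ∀ v ∈ LinearMap.range X.mulVecLin, 0 ≤ v ⬝ᵥ (-M i) *ᵥ v :=
    hline _ (by rw [neg_mulVec, dotProduct_neg]; linarith)
  have hτneg := hX.trace_mul_nonneg_of_nonneg_on_range (hM i).neg hneg
  rw [neg_mul, trace_neg] at hτneg
  have := hX.eq_zero_on_range_of_trace_mul_eq_zero (hM i).neg hneg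
    (by rw [neg_mul, trace_neg]; linarith [hτ i]) x hx
  rw [neg_mulVec, dotProduct_neg] at this
  linarith

theorem exists_isPeelingDirection_of_indefinite (hM : ∀ i, (M i).IsSymm)
    (hpair : PairwisePSDPencil M) (hX : X.PosSemidef) (hτ : ∀ i, 0 ≤ (M i * X).trace)
    (hT : IsPreconnected ((LinearMap.range X.mulVecLin : Set (m → ℝ)) \ {0}))
    {i₀ : ι} (hi₀ : (M i₀ * X).trace = 0)
    (hv : ∃ v ∈ LinearMap.range X.mulVecLin, v ⬝ᵥ M i₀ *ᵥ v ≠ 0) :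
    ∃ x, IsPeelingDirection M X x := by
  obtain ⟨⟨a, ha, hqa⟩, b, hb, hqb⟩ := hX.exists_pos_and_neg_on_range (hM i₀) hi₀ hv
  have hne : ∀ y : m → ℝ, y ⬝ᵥ M i₀ *ᵥ y ≠ 0 → y ≠ 0 := fun y hy h => hy (by simp [h])
  obtain ⟨x, ⟨hx, hx0⟩, hqx⟩ := hT.intermediate_value ⟨hb, hne b hqb.ne⟩ ⟨ha, hne a hqa.ne'⟩
    (continuous_dotProduct_mulVec_self _).continuousOn ⟨hqb.le, hqa.le⟩
  refine ⟨x, hx, hx0, fun i => ?_⟩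
  rcases eq_or_ne i i₀ with rfl | hi
  · exact ⟨hqx.ge, fun _ => hqx⟩
  obtain ⟨α, β, hαβ, hN⟩ := hpair i₀ i hi.symm
  exact quadForm_nonneg_of_pencil hN hαβ hX hi₀ (hτ i) hqa hqb hx hqx

theorem exists_isPeelingDirection_of_forall_vanish [Fintype ι] (hM : ∀ i, (M i).IsSymm)
    (hpair : PairwisePSDPencil M) (hX : X.PosSemidef) (hτ : ∀ i, 0 ≤ (M i * X).trace)
    (hT : IsPreconnected ((LinearMap.range X.mulVecLin : Set (m → ℝ)) \ {0}))
    (hTne : ((LinearMap.range X.mulVecLin : Set (m → ℝ)) \ {0}).Nonempty)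
    (hvanish : ∀ i, (M i * X).trace = 0 →
      ∀ v ∈ LinearMap.range X.mulVecLin, v ⬝ᵥ M i *ᵥ v = 0) :
    ∃ x, IsPeelingDirection M X x := by
  classical
  obtain ⟨x, ⟨hx, hx0⟩, hxslack⟩ : ∃ x ∈ (LinearMap.range X.mulVecLin : Set (m → ℝ)) \ {0},
      ∀ j, 0 < (M j * X).trace → 0 ≤ x ⬝ᵥ M j *ᵥ x := by
    by_contra! hcover
    obtain ⟨j, hj, hTj⟩ := hT.exists_subset_of_nested_or_disjoint hTne
      (s := Finset.univ.filter fun j => 0 < (M j * X).trace)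
      (U := fun j => {y | y ⬝ᵥ M j *ᵥ y < 0})
      (fun j _ => isOpen_lt (continuous_dotProduct_mulVec_self _) continuous_const)
      (fun i hi j hj => by
        rcases eq_or_ne i j with rfl | hij
        · exact Or.inl subset_rfl
        obtain ⟨α, β, hαβ, hN⟩ := hpair i j hij
        have := hX.trace_mul_nonneg hN
        rw [trace_smul_add_smul_mul] at this
        exact setOf_neg_nested_or_disjoint hN hαβ (Finset.mem_filter.mp hi).2
          (Finset.mem_filter.mp hj).2 this)
      (fun y hy => by
        obtain ⟨j, hj, hyj⟩ := hcover y hy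
        exact mem_iUnion₂.mpr ⟨j, Finset.mem_filter.mpr ⟨Finset.mem_univ j, hj⟩, hyj⟩)
    obtain ⟨v, hv, hqv⟩ := hX.exists_pos_on_range_of_trace_mul_pos (hM j)
      (Finset.mem_filter.mp hj).2
    have : v ⬝ᵥ M j *ᵥ v < 0 := hTj ⟨hv, fun h => by simp [show v = 0 from h] at hqv⟩
    linarith
  refine ⟨x, hx, hx0, fun i => ?_⟩
  rcases (hτ i).eq_or_lt with h0 | hpos
  · have := hvanish i h0.symm x hx
    exact ⟨this.ge, fun _ => this⟩
  · exact ⟨hxslack i hpos, fun h => absurd h hpos.ne'⟩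

theorem exists_isPeelingDirection [Fintype ι] (hM : ∀ i, (M i).IsSymm)
    (hpair : PairwisePSDPencil M) (hX : X.PosSemidef) (hτ : ∀ i, 0 ≤ (M i * X).trace)
    (hX0 : X ≠ 0) : ∃ x, IsPeelingDirection M X x := by
  rcases (show X.rank = 1 ∨ 1 < X.rank by have := mt rank_eq_zero_iff.mp hX0; omega)
    with hr | hr
  · exact hX.exists_isPeelingDirection_of_rank_eq_one hM hτ hr
  have hT := Submodule.isPathConnected_diff_zero (LinearMap.range X.mulVecLin)
    (by rw [← Module.finrank_eq_rank]; exact_mod_cast hr)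
  by_cases hind : ∃ i₀, (M i₀ * X).trace = 0 ∧
      ∃ v ∈ LinearMap.range X.mulVecLin, v ⬝ᵥ M i₀ *ᵥ v ≠ 0
  · obtain ⟨i₀, hi₀, hv⟩ := hind
    exact hX.exists_isPeelingDirection_of_indefinite hM hpair hτ hT.isConnected.isPreconnected
      hi₀ hv
  · push Not at hind
    exact hX.exists_isPeelingDirection_of_forall_vanish hM hpair hτ
      hT.isConnected.isPreconnected hT.nonempty hind

end PosSemidef

end Matrix

section Cone

variable {n : ℕ} {ι : Type*} {M : ι → Matrix (Fin n) (Fin n) ℝ}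

lemma mem_SCone_range {X : Matrix (Fin n) (Fin n) ℝ} :
    X ∈ SCone (range M) ↔ X.PosSemidef ∧ ∀ i, 0 ≤ (M i * X).trace := by
  simp [SCone]

lemma convex_SCone (𝓜 : Set (Matrix (Fin n) (Fin n) ℝ)) : Convex ℝ (SCone 𝓜) := by
  rintro X ⟨hX, hXN⟩ Y ⟨hY, hYN⟩ a b ha hb -
  refine ⟨(hX.smul ha).add (hY.smul hb), fun N hN => ?_⟩
  rw [mul_add, Matrix.mul_smul, Matrix.mul_smul, trace_add, trace_smul, trace_smul, smul_eq_mul,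
    smul_eq_mul]
  exact add_nonneg (mul_nonneg ha (hXN N hN)) (mul_nonneg hb (hYN N hN))

lemma smul_vecMulVec_self_mem {t : ℝ} (ht : 0 ≤ t) {x : Fin n → ℝ}
    (hx : ∀ i, 0 ≤ x ⬝ᵥ M i *ᵥ x) : t • vecMulVec x x ∈ SCone (range M) ∩ RankOneSet n := by
  refine ⟨mem_SCone_range.mpr ⟨(posSemidef_vecMulVec_star_self x).smul ht, fun i => ?_⟩,
    √t • x, ?_⟩
  · rw [Matrix.mul_smul, trace_smul, trace_mul_vecMulVec_self, smul_eq_mul]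
    exact mul_nonneg ht (hx i)
  · rw [smul_vecMulVec, vecMulVec_smul, smul_smul, Real.mul_self_sqrt ht]

lemma smul_two_mem_SCone_inter_rankOneSet {Z : Matrix (Fin n) (Fin n) ℝ}
    (hZ : Z ∈ SCone (range M) ∩ RankOneSet n) : (2 : ℝ) • Z ∈ SCone (range M) ∩ RankOneSet n := by
  obtain ⟨hZS, z, rfl⟩ := hZ
  refine smul_vecMulVec_self_mem zero_le_two fun i => ?_
  rw [← trace_mul_vecMulVec_self]
  exact (mem_SCone_range.mp hZS).2 i

variable [Fintype ι] {X : Matrix (Fin n) (Fin n) ℝ} {x : Fin n → ℝ}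

theorem Matrix.IsPeelingDirection.exists_sub_smul_vecMulVec_mem
    (hX : X ∈ SCone (range M)) (hx : IsPeelingDirection M X x) :
    ∃ t : ℝ, 0 ≤ t ∧ X - t • vecMulVec x x ∈ SCone (range M) ∧
      (X - t • vecMulVec x x).rank + slackCount M (X - t • vecMulVec x x) <
        X.rank + slackCount M X := by
  obtain ⟨hXpsd, hτ⟩ := mem_SCone_range.mp hX
  obtain ⟨⟨w, hw⟩, hx0, hq⟩ := hx
  rw [mulVecLin_apply] at hw
  subst hw
  have hc : 0 < w ⬝ᵥ X *ᵥ w := (hXpsd.dotProduct_mulVec_nonneg w).lt_of_ne' fun h =>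
    hx0 ((hXpsd.dotProduct_mulVec_zero_iff w).mp h)
  -- The index `none` stands for the constraint `t * wᵀ X w ≤ 1` that keeps `X - t x xᵀ` PSD.
  obtain ⟨t, ht, hle, j, hj, heq⟩ := exists_max_step
    (fun o => o.elim (w ⬝ᵥ X *ᵥ w) fun i => X *ᵥ w ⬝ᵥ M i *ᵥ (X *ᵥ w))
    (fun o => o.elim 1 fun i => (M i * X).trace) (by rintro (_ | i) <;> simp [hτ]) ⟨none, hc⟩
  have htrace : ∀ i, (M i * (X - t • vecMulVec (X *ᵥ w) (X *ᵥ w))).trace =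
      (M i * X).trace - t * (X *ᵥ w ⬝ᵥ M i *ᵥ (X *ᵥ w)) := fun i => by
    rw [mul_sub, trace_sub, Matrix.mul_smul, trace_smul, trace_mul_vecMulVec_self, smul_eq_mul]
  have htight : ∀ i, (M i * X).trace = 0 →
      (M i * (X - t • vecMulVec (X *ᵥ w) (X *ᵥ w))).trace = 0 := fun i h0 => by
    rw [htrace, h0, (hq i).2 h0, mul_zero, sub_zero]
  have hker := ker_le_ker_sub_smul_vecMulVec (isHermitian_iff_isSymm.mp hXpsd.1) w t
  refine ⟨t, ht, mem_SCone_range.mpr ⟨hXpsd.sub_smul_vecMulVec w ht ?_, fun i => ?_⟩, ?_⟩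
  · simpa [mul_comm] using hle none
  · rw [htrace]
    simpa [mul_comm] using hle (some i)
  cases j with
  | none =>
    have hw' : w ∈ LinearMap.ker (X - t • vecMulVec (X *ᵥ w) (X *ᵥ w)).mulVecLin := by
      simp only [Option.elim_none] at heq
      rw [LinearMap.mem_ker, mulVecLin_apply, sub_smul_vecMulVec_mulVec, dotProduct_comm,
        mul_comm, heq, one_smul, sub_self]
    have := rank_lt_rank_of_ker_lt (lt_of_le_of_ne hker fun h => hx0 (by rwa [← h] at hw'))
    have := slackCount_le htight
    omega
  | some j =>
    simp only [Option.elim_some] at hj heq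
    have := rank_le_rank_of_ker_le hker
    have := slackCount_lt htight (j := j) (fun h0 => hj.ne' ((hq j).2 h0))
      (by rw [htrace, mul_comm, heq, sub_self])
    omega

theorem mem_convexHull_of_mem_SCone (hM : ∀ i, (M i).IsSymm) (hpair : PairwisePSDPencil M)
    (hX : X ∈ SCone (range M)) : X ∈ convexHull ℝ (SCone (range M) ∩ RankOneSet n) := by
  induction hmeas : X.rank + slackCount M X using Nat.strong_induction_on generalizing X with
  | _ N ih =>
  by_cases hX0 : X = 0
  · subst hX0
    exact subset_convexHull ℝ _ ⟨mem_SCone_range.mpr ⟨.zero, by simp⟩, 0, by simp⟩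
  obtain ⟨hXpsd, hτ⟩ := mem_SCone_range.mp hX
  obtain ⟨x, hx⟩ := hXpsd.exists_isPeelingDirection hM hpair hτ hX0
  obtain ⟨t, ht, hX', hlt⟩ := hx.exists_sub_smul_vecMulVec_mem hX
  rw [← sub_add_cancel X (t • vecMulVec x x)]
  exact add_mem_convexHull_of_smul_two_mem (fun _ => smul_two_mem_SCone_inter_rankOneSet)
    (ih _ (hmeas ▸ hlt) hX' rfl) (smul_vecMulVec_self_mem ht fun i => (hx.2.2 i).1)

end Cone

theorem stmt_11_general {n k : ℕ} (M : Fin k → Matrix (Fin n) (Fin n) ℝ)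
    (hM : ∀ i, (M i).IsSymm)
    (h : ∀ i j : Fin k, i ≠ j →
      ∃ α β : ℝ, (α, β) ≠ (0, 0) ∧ (α • M i + β • M j).PosSemidef) :
    IsROG (SCone (Set.range M)) :=
  Subset.antisymm (fun _ hX => mem_convexHull_of_mem_SCone hM h hX)
    (convexHull_min inter_subset_left (convex_SCone _))

theorem stmt_11 {n k : ℕ} (hk : 2 ≤ k) (M : Fin k → Matrix (Fin n) (Fin n) ℝ)
    (hM : ∀ i, (M i).IsSymm)
    (h : ∀ i j : Fin k, i ≠ j →
      ∃ α β : ℝ, (α, β) ≠ (0, 0) ∧ (α • M i + β • M j).PosSemidef) :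
    IsROG (SCone (Set.range M)) :=
  stmt_11_general M hM h
end
end

section
/- For any closed convex cone K ⊆ ℝⁿ and any vector c ∈ ℝⁿ, the set {X ∈ S^n_+ : Xc ∈ K} is a rank-one generated closed convex cone. -/
open Matrix Set

noncomputable section

/-! Write `w = X c` and `t = cᵀ X c`. By Cauchy–Schwarz for the semi-inner product `X`, the
matrix `X - t⁻¹ w wᵀ` is still positive semidefinite, and it annihilates `c`. Factoring it as a
sum of rank-one matrices `v vᵀ`, each `v` is orthogonal to `c`, so `v vᵀ c = 0 ∈ K`, while the
remaining rank-one part `t⁻¹ w wᵀ` maps `c` to `w = X c ∈ K`. Thus every `X` in the cone is a sum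
of rank-one members of the cone, hence (the cone being closed under scaling) a convex combination
of them. -/

theorem sum_mem_convexHull_of_smul_mem {𝕜 E ι : Type*} [Field 𝕜] [LinearOrder 𝕜]
    [IsStrictOrderedRing 𝕜] [AddCommGroup E] [Module 𝕜 E] {C : Set E}
    (hC : ∀ x ∈ C, ∀ a : 𝕜, 0 < a → a • x ∈ C) {s : Finset ι} (hs : s.Nonempty) {f : ι → E}
    (hf : ∀ i ∈ s, f i ∈ C) : ∑ i ∈ s, f i ∈ convexHull 𝕜 C := by
  have hcard : (0 : 𝕜) < s.card := by exact_mod_cast hs.card_pos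
  have hsum : ∑ i ∈ s, f i = ∑ i ∈ s, (s.card : 𝕜)⁻¹ • ((s.card : 𝕜) • f i) := by
    simp only [smul_smul, inv_mul_cancel₀ hcard.ne', one_smul]
  rw [hsum]
  refine (convex_convexHull 𝕜 C).sum_mem (fun _ _ => inv_nonneg.2 hcard.le) ?_
    fun i hi => subset_convexHull 𝕜 C (hC _ (hf i hi) _ hcard)
  rw [Finset.sum_const, nsmul_eq_mul, mul_inv_cancel₀ hcard.ne']

namespace Matrix

section PosSemidefCone

open scoped ComplexOrder

variable {ι 𝕜 : Type*} [RCLike 𝕜]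

theorem convex_setOf_posSemidef : Convex ℝ {X : Matrix ι ι 𝕜 | X.PosSemidef} :=
  fun _ hX _ hY _ _ ha hb _ => (hX.smul ha).add (hY.smul hb)

theorem isClosed_setOf_posSemidef [Fintype ι] : IsClosed {X : Matrix ι ι 𝕜 | X.PosSemidef} := by
  have : {X : Matrix ι ι 𝕜 | X.PosSemidef} =
      {X | Xᴴ = X} ∩ ⋂ v : ι → 𝕜, {X | 0 ≤ star v ⬝ᵥ X *ᵥ v} := by
    ext X
    simp [posSemidef_iff_dotProduct_mulVec, IsHermitian]
  rw [this]
  exact (isClosed_eq continuous_id.matrix_conjTranspose continuous_id).inter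
    (isClosed_iInter fun v => isClosed_le continuous_const
      (continuous_const.dotProduct (continuous_id.matrix_mulVec continuous_const)))

end PosSemidefCone

theorem smul_vecMulVec_self_of_nonneg {ι : Type*} {a : ℝ} (ha : 0 ≤ a) (x : ι → ℝ) :
    a • vecMulVec x x = vecMulVec (√a • x) (√a • x) := by
  rw [smul_vecMulVec, vecMulVec_smul, smul_smul, Real.mul_self_sqrt ha]

variable {ι : Type*} [Fintype ι]

theorem vecMulVec_self_mulVec (x c : ι → ℝ) : vecMulVec x x *ᵥ c = (x ⬝ᵥ c) • x := by
  simp [vecMulVec_mulVec]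

theorem posSemidef_vecMulVec_self (x : ι → ℝ) : (vecMulVec x x).PosSemidef := by
  simpa using posSemidef_vecMulVec_self_star x

theorem dotProduct_sum_vecMulVec_self_mulVec {κ : Type*} [Fintype κ] (v : κ → ι → ℝ)
    (c : ι → ℝ) : c ⬝ᵥ (∑ i, vecMulVec (v i) (v i)) *ᵥ c = ∑ i, (v i ⬝ᵥ c) ^ 2 := by
  rw [sum_mulVec, dotProduct_sum]
  exact Finset.sum_congr rfl fun i _ => by
    rw [vecMulVec_self_mulVec, dotProduct_smul, smul_eq_mul, dotProduct_comm c (v i), sq]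

namespace PosSemidef

variable {X : Matrix ι ι ℝ}

open scoped MatrixOrder in
theorem exists_eq_sum_vecMulVec_self (hX : X.PosSemidef) :
    ∃ v : ι → ι → ℝ, X = ∑ i, vecMulVec (v i) (v i) := by
  classical
  obtain ⟨B, rfl⟩ := CStarAlgebra.nonneg_iff_eq_star_mul_self.mp hX.nonneg
  refine ⟨B, ?_⟩
  ext j k
  simp [mul_apply, vecMulVec_apply, sum_apply]

theorem exists_eq_sum_vecMulVec_self_of_mulVec_eq_zero (hX : X.PosSemidef) {c : ι → ℝ}
    (hXc : X *ᵥ c = 0) :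
    ∃ v : ι → ι → ℝ, X = ∑ i, vecMulVec (v i) (v i) ∧ ∀ i, v i ⬝ᵥ c = 0 := by
  obtain ⟨v, rfl⟩ := hX.exists_eq_sum_vecMulVec_self
  refine ⟨v, rfl, fun i => ?_⟩
  have h := dotProduct_sum_vecMulVec_self_mulVec v c
  rw [hXc, dotProduct_zero, eq_comm,
    Finset.sum_eq_zero_iff_of_nonneg fun i _ => sq_nonneg _] at h
  exact pow_eq_zero_iff two_ne_zero |>.mp (h i (Finset.mem_univ i))

theorem dotProduct_mulVec_sq_le (hX : X.PosSemidef) (x y : ι → ℝ) :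
    (x ⬝ᵥ X *ᵥ y) ^ 2 ≤ (x ⬝ᵥ X *ᵥ x) * (y ⬝ᵥ X *ᵥ y) := by
  classical
  have := LinearMap.BilinForm.apply_mul_apply_le_of_forall_zero_le (toLinearMap₂' ℝ X)
    (fun z => by simpa [toLinearMap₂'_apply'] using hX.dotProduct_mulVec_nonneg z) x y
  have hXT : Xᵀ = X := by simpa [conjTranspose_eq_transpose_of_trivial] using hX.1.eq
  rwa [toLinearMap₂'_apply', toLinearMap₂'_apply', dotProduct_mulVec y, dotProduct_comm _ x,
    ← mulVec_transpose, hXT, ← sq, toLinearMap₂'_apply', toLinearMap₂'_apply'] at this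

-- When `cᵀ X c = 0` we have `X c = 0`, so the junk value `0⁻¹ = 0` is harmless here and below.
theorem sub_smul_vecMulVec_mulVec (hX : X.PosSemidef) (c : ι → ℝ) :
    (X - (c ⬝ᵥ X *ᵥ c)⁻¹ • vecMulVec (X *ᵥ c) (X *ᵥ c)).PosSemidef := by
  have ht : 0 ≤ c ⬝ᵥ X *ᵥ c := by simpa using hX.dotProduct_mulVec_nonneg c
  have hR := (posSemidef_vecMulVec_self (X *ᵥ c)).smul (inv_nonneg.2 ht)
  refine .of_dotProduct_mulVec_nonneg (hX.1.sub hR.1) fun z => ?_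
  have hz : 0 ≤ z ⬝ᵥ X *ᵥ z := by simpa using hX.dotProduct_mulVec_nonneg z
  rw [star_trivial, sub_mulVec, dotProduct_sub, smul_mulVec, vecMulVec_self_mulVec,
    dotProduct_smul, dotProduct_smul, smul_eq_mul, smul_eq_mul, dotProduct_comm (X *ᵥ c) z,
    ← sq, sub_nonneg]
  exact inv_mul_le_of_le_mul₀ ht hz (mul_comm (c ⬝ᵥ X *ᵥ c) _ ▸ hX.dotProduct_mulVec_sq_le z c)

theorem smul_vecMulVec_mulVec_mulVec (hX : X.PosSemidef) (c : ι → ℝ) :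
    ((c ⬝ᵥ X *ᵥ c)⁻¹ • vecMulVec (X *ᵥ c) (X *ᵥ c)) *ᵥ c = X *ᵥ c := by
  rcases eq_or_ne (c ⬝ᵥ X *ᵥ c) 0 with ht | ht
  · have hXc : X *ᵥ c = 0 := (hX.dotProduct_mulVec_zero_iff c).1 (by simpa using ht)
    simp [hXc]
  · rw [smul_mulVec, vecMulVec_self_mulVec, dotProduct_comm (X *ᵥ c) c, smul_smul,
      inv_mul_cancel₀ ht, one_smul]

theorem exists_eq_vecMulVec_self_add_sum_vecMulVec_self (hX : X.PosSemidef) (c : ι → ℝ) :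
    ∃ (y : ι → ℝ) (v : ι → ι → ℝ), X = vecMulVec y y + ∑ i, vecMulVec (v i) (v i) ∧
      vecMulVec y y *ᵥ c = X *ᵥ c ∧ ∀ i, v i ⬝ᵥ c = 0 := by
  have ht : 0 ≤ (c ⬝ᵥ X *ᵥ c)⁻¹ := inv_nonneg.2 (by simpa using hX.dotProduct_mulVec_nonneg c)
  set y := √(c ⬝ᵥ X *ᵥ c)⁻¹ • (X *ᵥ c)
  have hy : (c ⬝ᵥ X *ᵥ c)⁻¹ • vecMulVec (X *ᵥ c) (X *ᵥ c) = vecMulVec y y :=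
    smul_vecMulVec_self_of_nonneg ht _
  have hyc : vecMulVec y y *ᵥ c = X *ᵥ c := hy ▸ hX.smul_vecMulVec_mulVec_mulVec c
  have hX' : (X - vecMulVec y y).PosSemidef := hy ▸ hX.sub_smul_vecMulVec_mulVec c
  obtain ⟨v, hv, hvc⟩ := hX'.exists_eq_sum_vecMulVec_self_of_mulVec_eq_zero
    (show (X - vecMulVec y y) *ᵥ c = 0 by rw [sub_mulVec, hyc, sub_self])
  exact ⟨y, v, by rw [← hv, add_sub_cancel], hyc, hvc⟩

end PosSemidef

end Matrix

theorem subset_convexHull_inter_rankOneSet {n : ℕ} {K : Set (Fin n → ℝ)}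
    (hK : ∀ x ∈ K, ∀ a : ℝ, 0 ≤ a → a • x ∈ K) (c : Fin n → ℝ) :
    {X | X.PosSemidef ∧ X *ᵥ c ∈ K} ⊆
      convexHull ℝ ({X | X.PosSemidef ∧ X *ᵥ c ∈ K} ∩ RankOneSet n) := by
  rintro X ⟨hX, hXc⟩
  have h0 : (0 : Fin n → ℝ) ∈ K := by simpa using hK _ hXc 0 le_rfl
  obtain ⟨y, v, hXv, hy, hv⟩ := hX.exists_eq_vecMulVec_self_add_sum_vecMulVec_self c
  have hsum : vecMulVec y y + ∑ i, vecMulVec (v i) (v i) =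
      ∑ o : Option (Fin n), vecMulVec (o.elim y v) (o.elim y v) :=
    (Fintype.sum_option fun o => vecMulVec (o.elim y v) (o.elim y v)).symm
  rw [hXv, hsum]
  refine sum_mem_convexHull_of_smul_mem ?_ Finset.univ_nonempty ?_
  · rintro _ ⟨⟨hZ, hZc⟩, x, rfl⟩ a ha
    refine ⟨⟨hZ.smul ha.le, ?_⟩, _, smul_vecMulVec_self_of_nonneg ha.le x⟩
    rw [smul_mulVec]
    exact hK _ hZc _ ha.le
  · rintro (_ | i) -
    · exact ⟨⟨posSemidef_vecMulVec_self y, hy ▸ hXc⟩, y, rfl⟩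
    · refine ⟨⟨posSemidef_vecMulVec_self (v i), ?_⟩, v i, rfl⟩
      simpa [vecMulVec_self_mulVec, hv i] using h0

theorem stmt_13 {n : ℕ} (K : Set (Fin n → ℝ)) (hKconv : Convex ℝ K) (hKclosed : IsClosed K)
    (hKcone : ∀ x ∈ K, ∀ α : ℝ, 0 ≤ α → α • x ∈ K) (c : Fin n → ℝ) :
    ∀ S : Set (Matrix (Fin n) (Fin n) ℝ),
      S = {X | X.PosSemidef ∧ X.mulVec c ∈ K} →
      IsClosed S ∧ Convex ℝ S ∧ (∀ X ∈ S, ∀ α : ℝ, 0 ≤ α → α • X ∈ S) ∧ IsROG S := by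
  rintro S rfl
  have hconv : Convex ℝ {X | X.PosSemidef ∧ X *ᵥ c ∈ K} :=
    convex_setOf_posSemidef.inter <|
      hKconv.is_linear_preimage ⟨fun X Y => add_mulVec X Y c, fun a X => smul_mulVec a X c⟩
  refine ⟨isClosed_setOf_posSemidef.inter
      (hKclosed.preimage (continuous_id.matrix_mulVec continuous_const)), hconv,
    fun X ⟨hX, hXc⟩ a ha => ⟨hX.smul ha, by rw [smul_mulVec]; exact hKcone _ hXc a ha⟩, ?_⟩
  exact (subset_convexHull_inter_rankOneSet hKcone c).antisymm
    (convexHull_min inter_subset_left hconv)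
end
end
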